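/- arXiv:math/0701012 — 4 statements merged into one kernel-verified Lean document; each statement's English description precedes it below -/
import Mathlib

section
/- Let G be a simple graph with maximum degree Δ ≥ 4, and let H be the subgraph of G induced by the vertices of degree less than Δ/3. Suppose H has no isolated edges, and suppose there exists a proper edge coloring c of G with color set {1, …, Δ+300} such that S_c(u) ≠ S_c(v) for every pair of adjacent vertices u and v both of degree at least Δ/3. Then G has an avd-coloring with color set {1, …, Δ+300}, i.e., a proper edge coloring c' with these colors such that S_{c'}(u) ≠ S_{c'}(v) for every pair of adjacent vertices u and v. -/
/-!
Only edges joining two vertices of degree `< Δ/3` (the graph `H`) are recoloured. Every other edge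
keeps its colour, so adjacent vertices of degree `≥ Δ/3` stay distinguished, and a vertex of degree
`< Δ/3` next to one of degree `≥ Δ/3` has a colour set of different size.

The edges of `H` are recoloured greedily, lexicographically by the keys of their lower and higher
endpoints, where a vertex's key grows with its closeness to a root of its component of `H`. An edge
`pq` with `p` below `q` avoids the colours at `p`, at `q` and at the highest neighbour of `q` below
`p`, and at most four single colours: fewer than `Δ + 300` colours, as those three vertices have
degree `< Δ/3`. A single colour is forbidden at an edge `az` for a pair `{a, b}` whose other edges
are all coloured earlier: then equal colour sets at `a` and `b` would force `az` to get the one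
colour at `b` missing at `a`.

Now let `xy` be an edge of `H` with `x` below `y`. If a neighbour of `y` lies strictly between
them, the lowest one, `w`, separates `x` from `y`, because `wy` avoids every colour at `x`.
Otherwise `x` is the highest lower neighbour of `y`, and `{x, y}` is protected at the last edge of
`y` if `y` has a higher neighbour. If not, `y` is a local maximum, hence the root, so it is the
highest neighbour of `x`, and `{x, y}` is protected at the last edge other than `xy` that touches
`x` or `y`; such an edge exists because `H` has no isolated edges. So a vertex `a` only ever needs
protecting against its highest lower neighbour and its highest neighbour.
-/

open Finset SimpleGraph Function

namespace AvdRecoloring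

variable {V : Type*}

section Greedy

noncomputable def freshColor (N : ℕ) (s : Finset ℕ) : ℕ :=
  if h : (Icc 1 N \ s).Nonempty then (Icc 1 N \ s).min' h else 0

lemma freshColor_mem {N : ℕ} {s : Finset ℕ} (hs : #s < N) : freshColor N s ∈ Icc 1 N \ s := by
  have hne : (Icc 1 N \ s).Nonempty := by
    have := le_card_sdiff s (Icc 1 N)
    rw [Nat.card_Icc] at this
    exact card_pos.1 (by omega)
  rw [freshColor, dif_pos hne]
  exact min'_mem _ _

variable [Finite V] {β : Type*} [LinearOrder β] (H : SimpleGraph V) [DecidableRel H.Adj]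
  (rank : V → V → β) (forb : (V → V → ℕ) → V → V → Finset ℕ) (N : ℕ) (c : V → V → ℕ)

noncomputable def greedyColoring (u v : V) : ℕ :=
  (Finite.wellFounded_of_trans_of_irrefl (InvImage (· < ·) fun e : V × V => rank e.1 e.2)).fix
    (C := fun _ => ℕ)
    (fun e rec => if H.Adj e.1 e.2 then
      freshColor N (forb (fun a b => if h : H.Adj a b ∧ rank a b < rank e.1 e.2
        then rec (a, b) h.2 else c a b) e.1 e.2)
      else c e.1 e.2) (u, v)

noncomputable def stageColoring (u v a b : V) : ℕ :=
  if H.Adj a b ∧ rank a b < rank u v then greedyColoring H rank forb N c a b else c a b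

lemma greedyColoring_eq (u v : V) :
    greedyColoring H rank forb N c u v =
      if H.Adj u v then freshColor N (forb (stageColoring H rank forb N c u v) u v) else c u v := by
  rw [greedyColoring, WellFounded.fix_eq]
  simp only [dite_eq_ite]
  rfl

lemma greedyColoring_of_not_adj {u v : V} (h : ¬H.Adj u v) :
    greedyColoring H rank forb N c u v = c u v := by
  rw [greedyColoring_eq, if_neg h]

lemma greedyColoring_mem (hforb : ∀ cc u v, H.Adj u v → #(forb cc u v) < N) {u v : V}
    (h : H.Adj u v) :
    greedyColoring H rank forb N c u v ∈
      Icc 1 N \ forb (stageColoring H rank forb N c u v) u v := by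
  rw [greedyColoring_eq, if_pos h]
  exact freshColor_mem (hforb _ u v h)

lemma stageColoring_eq {u v a b : V} (h : H.Adj a b → rank a b < rank u v) :
    stageColoring H rank forb N c u v a b = greedyColoring H rank forb N c a b := by
  by_cases hab : H.Adj a b
  · exact if_pos ⟨hab, h hab⟩
  · rw [stageColoring, if_neg (fun h' => hab h'.1), greedyColoring_of_not_adj _ _ _ _ _ hab]

lemma image_stageColoring {u v a : V} {s : Finset V}
    (h : ∀ w ∈ s, H.Adj a w → rank a w < rank u v) :
    s.image (stageColoring H rank forb N c u v a) = s.image (greedyColoring H rank forb N c a) :=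
  image_congr fun w hw => stageColoring_eq H rank forb N c (h w hw)

lemma greedyColoring_comm (hrank : ∀ u v, rank u v = rank v u)
    (hforb : ∀ cc u v, H.Adj u v → forb cc u v = forb cc v u) (hsymm : ∀ u v, c u v = c v u)
    (u v : V) : greedyColoring H rank forb N c u v = greedyColoring H rank forb N c v u := by
  have hstage : stageColoring H rank forb N c u v = stageColoring H rank forb N c v u := by
    ext a b
    simp only [stageColoring, hrank u v]
  rw [greedyColoring_eq, greedyColoring_eq, hstage]
  by_cases h : H.Adj u v
  · rw [if_pos h, if_pos h.symm, hforb _ u v h]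
  · rw [if_neg h, if_neg (fun h' => h h'.symm), hsymm]

end Greedy

section BfsKey

variable (H : SimpleGraph V)

noncomputable def bfsRoot (v : V) : V := (H.connectedComponentMk v).out

lemma reachable_bfsRoot (v : V) : H.Reachable v (bfsRoot H v) :=
  ConnectedComponent.exact (Quot.out_eq _).symm

lemma bfsRoot_eq_of_reachable {u v : V} (h : H.Reachable u v) : bfsRoot H u = bfsRoot H v := by
  rw [bfsRoot, bfsRoot, ConnectedComponent.sound h]

variable [Fintype V]

noncomputable def bfsKey (v : V) : ℤ ×ₗ ℕ :=
  toLex (-(H.dist v (bfsRoot H v) : ℤ), (Fintype.equivFin V v : ℕ))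

lemma bfsKey_injective : Injective (bfsKey H) := fun _ _ h =>
  (Fintype.equivFin V).injective (Fin.val_injective (congrArg (fun k => (ofLex k).2) h))

lemma exists_adj_bfsKey_lt {v : V} (hv : v ≠ bfsRoot H v) :
    ∃ w, H.Adj v w ∧ bfsKey H v < bfsKey H w := by
  obtain ⟨p, hp⟩ := (reachable_bfsRoot H v).exists_walk_length_eq_dist
  obtain ⟨w, hvw, q, rfl⟩ := Walk.exists_eq_cons_of_ne hv p
  have hroot : bfsRoot H w = bfsRoot H v := (bfsRoot_eq_of_reachable H hvw.reachable).symm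
  have hdist : H.dist w (bfsRoot H v) < H.dist v (bfsRoot H v) := by
    have := dist_le q
    rw [Walk.length_cons] at hp
    omega
  refine ⟨w, hvw, Prod.Lex.toLex_lt_toLex.2 (Or.inl ?_)⟩
  rw [hroot]
  omega

lemma bfsKey_le_of_isLocalMax {u v : V} (hv : ∀ w, H.Adj v w → bfsKey H w < bfsKey H v)
    (huv : H.Reachable u v) : bfsKey H u ≤ bfsKey H v := by
  have hroot : bfsRoot H v = v := by
    by_contra hne
    obtain ⟨w, hvw, hlt⟩ := exists_adj_bfsKey_lt H (Ne.symm hne)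
    exact lt_asymm hlt (hv w hvw)
  rcases eq_or_ne u v with rfl | hne
  · exact le_rfl
  refine le_of_lt (Prod.Lex.toLex_lt_toLex.2 (Or.inl ?_))
  have := huv.pos_dist_of_ne hne
  rw [bfsRoot_eq_of_reachable H huv, hroot, dist_self]
  omega

end BfsKey

section Palette

variable (G : SimpleGraph V)

def IsProperEdgeColoring (f : V → V → ℕ) : Prop :=
  ∀ u v w, G.Adj u v → G.Adj u w → v ≠ w → f u v ≠ f u w

variable [Fintype V] [DecidableRel G.Adj]

def palette (f : V → V → ℕ) (v : V) : Finset ℕ := (G.neighborFinset v).image (f v)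

def edgeColors [DecidableEq V] (f : V → V → ℕ) (v : V) (s : Finset V) : Finset ℕ :=
  (G.neighborFinset v \ s).image (f v)

variable {G} {f : V → V → ℕ}

lemma card_palette_le (v : V) : #(palette G f v) ≤ G.degree v :=
  card_image_le.trans (card_neighborFinset_eq_degree G v).le

lemma IsProperEdgeColoring.injOn (hf : IsProperEdgeColoring G f) (v : V) :
    Set.InjOn (f v) (G.neighborFinset v) := fun a ha b hb hab => by
  by_contra hne
  exact hf v a b (by simpa using ha) (by simpa using hb) hne hab

lemma IsProperEdgeColoring.card_palette (hf : IsProperEdgeColoring G f) (v : V) :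
    #(palette G f v) = G.degree v := by
  rw [palette, card_image_of_injOn (hf.injOn v), card_neighborFinset_eq_degree]

lemma IsProperEdgeColoring.palette_ne_of_degree_ne (hf : IsProperEdgeColoring G f) {u v : V}
    (h : G.degree u ≠ G.degree v) : palette G f u ≠ palette G f v := fun h' =>
  h (by rw [← hf.card_palette, h', hf.card_palette])

variable [DecidableEq V]

lemma IsProperEdgeColoring.edgeColors_eq (hf : IsProperEdgeColoring G f) {v : V} {s : Finset V}
    (hs : s ⊆ G.neighborFinset v) : edgeColors G f v s = palette G f v \ s.image (f v) :=
  image_sdiff_of_injOn (hf.injOn v) hs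

lemma IsProperEdgeColoring.edgeColors_sdiff_eq_singleton (hf : IsProperEdgeColoring G f)
    {a b z : V} (hab : G.Adj a b) (haz : G.Adj a z) (hzb : z ≠ b) (hsym : f a b = f b a)
    (h : palette G f a = palette G f b) :
    edgeColors G f b {a} \ edgeColors G f a {b, z} = {f a z} := by
  have hz : f a z ∈ palette G f a := mem_image_of_mem _ (by simpa using haz)
  have hne : f a z ≠ f a b := hf a z b haz hab hzb
  rw [hf.edgeColors_eq (by simpa using hab.symm),
    hf.edgeColors_eq (by simp [insert_subset_iff, hab, haz]),
    ← h, image_singleton, image_insert, image_singleton, ← hsym]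
  ext x
  simp only [mem_sdiff, mem_singleton, mem_insert]
  constructor
  · tauto
  · rintro rfl
    exact ⟨⟨hz, hne⟩, fun h' => h'.2 (Or.inr rfl)⟩

end Palette

section TopBy

variable {α : Type*} [LinearOrder α] (key : V → α)

noncomputable def topBy (s : Finset V) : Option V :=
  if h : s.Nonempty then some (s.exists_max_image key h).choose else none

variable {key}

lemma topBy_spec {s : Finset V} {x : V} (h : topBy key s = some x) :
    x ∈ s ∧ ∀ y ∈ s, key y ≤ key x := by
  unfold topBy at h
  split_ifs at h with hs
  cases h
  exact (s.exists_max_image key hs).choose_spec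

lemma topBy_eq_some (hkey : Injective key) {s : Finset V} {x : V} (hx : x ∈ s)
    (hmax : ∀ y ∈ s, key y ≤ key x) : topBy key s = some x := by
  have hs : s.Nonempty := ⟨x, hx⟩
  obtain ⟨hmem, hle⟩ := (s.exists_max_image key hs).choose_spec
  rw [topBy, dif_pos hs, hkey (le_antisymm (hmax _ hmem) (hle x hx))]

end TopBy

section Rank

variable {α : Type*} [LinearOrder α] (key : V → α)

def edgeRank (u v : V) : α ×ₗ α := toLex (min (key u) (key v), max (key u) (key v))

variable {key}

lemma edgeRank_comm (u v : V) : edgeRank key u v = edgeRank key v u := by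
  simp [edgeRank, min_comm, max_comm]

lemma edgeRank_lt_of_key_lt {a w p q : V} (hp : key a < key p) (hq : key a < key q) :
    edgeRank key a w < edgeRank key p q :=
  Prod.Lex.toLex_lt_toLex.2 (Or.inl ((min_le_left _ _).trans_lt (lt_min hp hq)))

lemma edgeRank_lt_edgeRank {v w z : V} (hv : key v < key z) (hw : key w < key z) :
    edgeRank key v w < edgeRank key v z := by
  rw [edgeRank, edgeRank, min_eq_left hv.le, max_eq_right hv.le]
  rcases lt_or_ge (key w) (key v) with h | h
  · exact Prod.Lex.toLex_lt_toLex.2 (Or.inl (min_lt_of_right_lt h))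
  · exact Prod.Lex.toLex_lt_toLex.2 (Or.inr ⟨min_eq_left h, max_lt hv hw⟩)

lemma edgeRank_injective (hkey : Injective key) {u v u' v' : V}
    (h : edgeRank key u v = edgeRank key u' v') : s(u, v) = s(u', v') := by
  simp only [edgeRank, toLex_inj, Prod.mk.injEq] at h
  obtain ⟨hmin, hmax⟩ := h
  rcases le_total (key u) (key v) with h1 | h1 <;>
    rcases le_total (key u') (key v') with h2 | h2 <;>
    simp only [min_eq_left, min_eq_right, max_eq_left, max_eq_right, h1, h2] at hmin hmax <;>
    simp [hkey hmin, hkey hmax, Sym2.eq_swap]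

end Rank

section LastEdge

variable [Fintype V] [DecidableEq V] {H : SimpleGraph V} [DecidableRel H.Adj] {α : Type*}
  [LinearOrder α] {key : V → α}

lemma exists_last_edge (hkey : Injective key) {x y : V} (hxy : H.Adj x y)
    (hiso : (∃ w, H.Adj x w ∧ w ≠ y) ∨ (∃ w, H.Adj y w ∧ w ≠ x)) :
    ∃ a b z, (a = x ∧ b = y ∨ a = y ∧ b = x) ∧ H.Adj a z ∧ z ≠ b ∧
      (∀ w, H.Adj b w → w ≠ a → edgeRank key b w < edgeRank key a z) ∧
      (∀ w, H.Adj a w → w ≠ b → w ≠ z → edgeRank key a w < edgeRank key a z) := by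
  set E := (({x, y} : Finset V) ×ˢ univ).filter fun e => H.Adj e.1 e.2 ∧ s(e.1, e.2) ≠ s(x, y)
  have hE : E.Nonempty := by
    rcases hiso with ⟨w, hw, hwy⟩ | ⟨w, hw, hwx⟩
    · exact ⟨(x, w), mem_filter.2 ⟨by simp, hw, by simp [hwy, hxy.ne]⟩⟩
    · exact ⟨(y, w), mem_filter.2 ⟨by simp, hw, by simp [hwx, hxy.ne.symm]⟩⟩
  obtain ⟨⟨a, z⟩, hg, hmax⟩ := E.exists_max_image (fun e => edgeRank key e.1 e.2) hE
  have hearly : ∀ u w, u = x ∨ u = y → H.Adj u w → s(u, w) ≠ s(x, y) → s(u, w) ≠ s(a, z) →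
      edgeRank key u w < edgeRank key a z := fun u w hu huw h1 h2 =>
    lt_of_le_of_ne (hmax (u, w) (mem_filter.2 ⟨by simpa using hu, huw, h1⟩))
      fun h => h2 (edgeRank_injective hkey h)
  simp only [E, mem_filter, mem_product, mem_insert, mem_singleton, mem_univ, and_true] at hg
  obtain ⟨ha, haz, hne⟩ := hg
  have hxy' := hxy.ne
  have hyx' := hxy.ne.symm
  have haz' := haz.ne
  have hza' := haz.ne.symm
  rcases ha with rfl | rfl
  · refine ⟨a, y, z, Or.inl ⟨rfl, rfl⟩, haz, fun h => hne (by rw [h]), fun w hw hwa => ?_,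
      fun w hw hwy hwz => ?_⟩
    · exact hearly y w (Or.inr rfl) hw (by simp; tauto) (by simp; tauto)
    · exact hearly a w (Or.inl rfl) hw (by simp; tauto) (by simp; tauto)
  · refine ⟨a, x, z, Or.inr ⟨rfl, rfl⟩, haz, fun h => hne (by rw [h, Sym2.eq_swap]),
      fun w hw hwa => ?_, fun w hw hwx hwz => ?_⟩
    · exact hearly x w (Or.inl rfl) hw (by simp; tauto) (by simp; tauto)
    · exact hearly a w (Or.inr rfl) hw (by simp; tauto) (by simp; tauto)

end LastEdge

section Forbidden

variable [Fintype V] [DecidableEq V] (G H : SimpleGraph V) [DecidableRel G.Adj] [DecidableRel H.Adj]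
  {α : Type*} [LinearOrder α] (key : V → α)

noncomputable def maxNeighborBelow (v : V) (k : α) : Option V :=
  topBy key ((H.neighborFinset v).filter (key · < k))

noncomputable def partners (a : V) : Finset V :=
  (maxNeighborBelow H key a (key a)).toFinset ∪ (topBy key (H.neighborFinset a)).toFinset

def ofCardLeOne (s : Finset ℕ) : Finset ℕ := if #s ≤ 1 then s else ∅

noncomputable def guardColors (cc : V → V → ℕ) (a z : V) : Finset ℕ :=
  (partners H key a).biUnion fun b =>
    ofCardLeOne (edgeColors G cc b {a} \ edgeColors G cc a {b, z})

noncomputable def orientedForbidden (cc : V → V → ℕ) (p q : V) : Finset ℕ :=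
  palette G cc p ∪ palette G cc q ∪ (maxNeighborBelow H key q (key p)).elim ∅ (palette G cc) ∪
    guardColors G H key cc p q ∪ guardColors G H key cc q p

noncomputable def forbidden (cc : V → V → ℕ) (u v : V) : Finset ℕ :=
  if key u < key v then orientedForbidden G H key cc u v else orientedForbidden G H key cc v u

variable {G H key}

lemma card_ofCardLeOne_le (s : Finset ℕ) : #(ofCardLeOne s) ≤ 1 := by
  unfold ofCardLeOne
  split_ifs with h
  · exact h
  · simp

lemma mem_ofCardLeOne {s : Finset ℕ} {x : ℕ} (h : s = {x}) : x ∈ ofCardLeOne s := by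
  simp [ofCardLeOne, h]

lemma card_guardColors_le (cc : V → V → ℕ) (a z : V) : #(guardColors G H key cc a z) ≤ 2 := by
  have hopt (o : Option V) : #o.toFinset ≤ 1 := by cases o <;> simp
  have hpartners : #(partners H key a) ≤ 2 :=
    (card_union_le _ _).trans (add_le_add (hopt _) (hopt _))
  have := card_biUnion_le_card_mul (partners H key a)
    (fun b => ofCardLeOne (edgeColors G cc b {a} \ edgeColors G cc a {b, z})) 1
    fun b _ => card_ofCardLeOne_le _
  unfold guardColors
  omega

lemma card_orientedForbidden_lt {N : ℕ} (hlow : ∀ u v, H.Adj u v → 3 * G.degree u + 5 ≤ N)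
    (cc : V → V → ℕ) {p q : V} (hpq : H.Adj p q) : #(orientedForbidden G H key cc p q) < N := by
  unfold orientedForbidden
  set P := (maxNeighborBelow H key q (key p)).elim ∅ (palette G cc)
  have hP : 3 * #P + 5 ≤ N := by
    cases hw : maxNeighborBelow H key q (key p) with
    | none =>
      have := hlow p q hpq
      simp only [P, hw, Option.elim_none, card_empty]
      omega
    | some w =>
      have hqw : H.Adj q w := by simpa using (mem_filter.1 (topBy_spec hw).1).1
      have := card_palette_le (G := G) (f := cc) w
      have := hlow w q hqw.symm
      simp only [P, hw, Option.elim_some]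
      omega
  have := hlow p q hpq
  have := hlow q p hpq.symm
  have := card_palette_le (G := G) (f := cc) p
  have := card_palette_le (G := G) (f := cc) q
  have := card_guardColors_le (G := G) (H := H) (key := key) cc p q
  have := card_guardColors_le (G := G) (H := H) (key := key) cc q p
  have := card_union_le (palette G cc p ∪ palette G cc q ∪ P ∪ guardColors G H key cc p q)
    (guardColors G H key cc q p)
  have := card_union_le (palette G cc p ∪ palette G cc q ∪ P) (guardColors G H key cc p q)
  have := card_union_le (palette G cc p ∪ palette G cc q) P
  have := card_union_le (palette G cc p) (palette G cc q)
  omega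

lemma card_forbidden_lt {N : ℕ} (hlow : ∀ u v, H.Adj u v → 3 * G.degree u + 5 ≤ N)
    (cc : V → V → ℕ) {u v : V} (huv : H.Adj u v) : #(forbidden G H key cc u v) < N := by
  unfold forbidden
  split_ifs
  · exact card_orientedForbidden_lt hlow cc huv
  · exact card_orientedForbidden_lt hlow cc huv.symm

lemma forbidden_comm (hkey : Injective key) (cc : V → V → ℕ) {u v : V} (huv : u ≠ v) :
    forbidden G H key cc u v = forbidden G H key cc v u := by
  rcases lt_or_gt_of_ne (hkey.ne huv) with h | h
  · rw [forbidden, forbidden, if_pos h, if_neg (lt_asymm h)]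
  · rw [forbidden, forbidden, if_neg (lt_asymm h), if_pos h]

lemma palette_subset_forbidden (cc : V → V → ℕ) (u v : V) :
    palette G cc u ⊆ forbidden G H key cc u v := by
  unfold forbidden orientedForbidden
  split_ifs <;> intro x hx <;> simp [hx]

lemma guardColors_subset_forbidden (cc : V → V → ℕ) (a z : V) :
    guardColors G H key cc a z ⊆ forbidden G H key cc a z := by
  unfold forbidden orientedForbidden
  split_ifs <;> intro x hx <;> simp [hx]

lemma palette_maxNeighborBelow_subset_forbidden (cc : V → V → ℕ) {p q w : V}
    (hpq : key p < key q) (hw : maxNeighborBelow H key q (key p) = some w) :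
    palette G cc w ⊆ forbidden G H key cc p q := by
  intro x hx
  rw [forbidden, if_pos hpq, orientedForbidden, hw]
  simp [hx]

end Forbidden

section Recolor

variable [Fintype V] [DecidableEq V] (G H : SimpleGraph V) [DecidableRel G.Adj] [DecidableRel H.Adj]
  {α : Type*} [LinearOrder α] (key : V → α) (N : ℕ) (c : V → V → ℕ)

noncomputable abbrev recolor : V → V → ℕ := greedyColoring H (edgeRank key) (forbidden G H key) N c

variable {G H key N c}

lemma recolor_of_not_adj {u v : V} (h : ¬H.Adj u v) : recolor G H key N c u v = c u v :=
  greedyColoring_of_not_adj _ _ _ _ _ h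

lemma recolor_mem_sdiff (hlow : ∀ u v, H.Adj u v → 3 * G.degree u + 5 ≤ N) {u v : V}
    (huv : H.Adj u v) :
    recolor G H key N c u v ∈ Icc 1 N \
      forbidden G H key (stageColoring H (edgeRank key) (forbidden G H key) N c u v) u v :=
  greedyColoring_mem _ _ _ _ _ (fun cc _ _ => card_forbidden_lt hlow cc) huv

lemma recolor_comm (hkey : Injective key) (hsymm : ∀ u v, c u v = c v u) (u v : V) :
    recolor G H key N c u v = recolor G H key N c v u :=
  greedyColoring_comm _ _ _ _ _ edgeRank_comm
    (fun cc _ _ huv => forbidden_comm hkey cc huv.ne) hsymm u v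

lemma recolor_mem_Icc (hlow : ∀ u v, H.Adj u v → 3 * G.degree u + 5 ≤ N)
    (hcol : ∀ u v, G.Adj u v → c u v ∈ Icc 1 N) {u v : V} (huv : G.Adj u v) :
    recolor G H key N c u v ∈ Icc 1 N := by
  by_cases h : H.Adj u v
  · exact (mem_sdiff.1 (recolor_mem_sdiff (key := key) (c := c) hlow h)).1
  · rw [recolor_of_not_adj h]
    exact hcol u v huv

lemma recolor_ne_of_edgeRank_lt (hlow : ∀ u v, H.Adj u v → 3 * G.degree u + 5 ≤ N) {u v w : V}
    (huv : H.Adj u v) (huw : G.Adj u w)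
    (hrank : H.Adj u w → edgeRank key u w < edgeRank key u v) :
    recolor G H key N c u v ≠ recolor G H key N c u w := by
  intro heq
  apply (mem_sdiff.1 (recolor_mem_sdiff (key := key) (c := c) hlow huv)).2
  apply palette_subset_forbidden
  rw [heq, palette]
  exact mem_image.2 ⟨w, by simpa using huw, stageColoring_eq _ _ _ _ _ hrank⟩

lemma isProperEdgeColoring_recolor (hkey : Injective key)
    (hlow : ∀ u v, H.Adj u v → 3 * G.degree u + 5 ≤ N) (hproper : IsProperEdgeColoring G c) :
    IsProperEdgeColoring G (recolor G H key N c) := by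
  intro u v w huv huw hvw
  by_cases hv : H.Adj u v <;> by_cases hw : H.Adj u w
  · have hne : edgeRank key u v ≠ edgeRank key u w := fun h =>
      hvw (Sym2.congr_right.1 (edgeRank_injective hkey h))
    rcases lt_or_gt_of_ne hne with h | h
    · exact (recolor_ne_of_edgeRank_lt hlow hw huv fun _ => h).symm
    · exact recolor_ne_of_edgeRank_lt hlow hv huw fun _ => h
  · exact recolor_ne_of_edgeRank_lt hlow hv huw fun h => absurd h hw
  · exact (recolor_ne_of_edgeRank_lt hlow hw huv fun h => absurd h hv).symm
  · rw [recolor_of_not_adj hv, recolor_of_not_adj hw]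
    exact hproper u v w huv huw hvw

lemma palette_recolor_ne_of_maxNeighborBelow (hkey : Injective key) (hH : H ≤ G)
    (hlow : ∀ u v, H.Adj u v → 3 * G.degree u + 5 ≤ N) (hsymm : ∀ u v, c u v = c v u) {w x y : V}
    (hwy : H.Adj w y) (hlt : key w < key y) (hx : maxNeighborBelow H key y (key w) = some x) :
    palette G (recolor G H key N c) x ≠ palette G (recolor G H key N c) y := by
  have hxw : key x < key w := (mem_filter.1 (topBy_spec hx).1).2
  intro h
  apply (mem_sdiff.1 (recolor_mem_sdiff (key := key) (c := c) hlow hwy)).2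
  apply palette_maxNeighborBelow_subset_forbidden _ hlt hx
  rw [palette, image_stageColoring _ _ _ _ _ fun u _ _ => edgeRank_lt_of_key_lt hxw (hxw.trans hlt),
    ← palette, h, recolor_comm hkey hsymm]
  exact mem_image_of_mem _ (by simpa using (hH hwy).symm)

lemma palette_recolor_ne_of_mem_partners (hkey : Injective key) (hH : H ≤ G)
    (hlow : ∀ u v, H.Adj u v → 3 * G.degree u + 5 ≤ N) (hsymm : ∀ u v, c u v = c v u)
    (hproper : IsProperEdgeColoring G c) {a b z : V} (hab : H.Adj a b) (haz : H.Adj a z)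
    (hzb : z ≠ b) (hb : b ∈ partners H key a)
    (hb_early : ∀ w, H.Adj b w → w ≠ a → edgeRank key b w < edgeRank key a z)
    (ha_early : ∀ w, H.Adj a w → w ≠ b → w ≠ z → edgeRank key a w < edgeRank key a z) :
    palette G (recolor G H key N c) a ≠ palette G (recolor G H key N c) b := by
  intro h
  apply (mem_sdiff.1 (recolor_mem_sdiff (key := key) (c := c) hlow haz)).2
  apply guardColors_subset_forbidden
  refine mem_biUnion.2 ⟨b, hb, mem_ofCardLeOne ?_⟩
  rw [edgeColors, edgeColors, image_stageColoring _ _ _ _ _ fun w hw hbw =>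
      hb_early w hbw (by simpa using (mem_sdiff.1 hw).2),
    image_stageColoring _ _ _ _ _ fun w hw haw => by
      obtain ⟨-, hw⟩ := mem_sdiff.1 hw
      simp only [mem_insert, mem_singleton, not_or] at hw
      exact ha_early w haw hw.1 hw.2,
    ← edgeColors, ← edgeColors]
  exact (isProperEdgeColoring_recolor hkey hlow hproper).edgeColors_sdiff_eq_singleton
    (hH hab) (hH haz) hzb (recolor_comm hkey hsymm a b) h

lemma palette_recolor_ne_of_exists_between (hkey : Injective key) (hH : H ≤ G)
    (hlow : ∀ u v, H.Adj u v → 3 * G.degree u + 5 ≤ N) (hsymm : ∀ u v, c u v = c v u) {x y : V}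
    (hxy : H.Adj x y) (hA : ∃ w, H.Adj y w ∧ key x < key w ∧ key w < key y) :
    palette G (recolor G H key N c) x ≠ palette G (recolor G H key N c) y := by
  set s := (H.neighborFinset y).filter fun w => key x < key w ∧ key w < key y
  obtain ⟨w, hws, hmin⟩ := s.exists_min_image key (by
    obtain ⟨w, hw⟩ := hA; exact ⟨w, by simpa [s] using hw⟩)
  obtain ⟨hyw, hxw, hwy⟩ : H.Adj y w ∧ key x < key w ∧ key w < key y := by simpa [s] using hws
  refine palette_recolor_ne_of_maxNeighborBelow hkey hH hlow hsymm hyw.symm hwy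
    (topBy_eq_some hkey (by simpa using ⟨hxy.symm, hxw⟩) fun u hu => ?_)
  obtain ⟨hyu, huw⟩ : H.Adj y u ∧ key u < key w := by simpa using hu
  by_contra! hxu
  exact (hmin u (by simpa [s] using ⟨hyu, hxu, huw.trans hwy⟩)).not_gt huw

lemma palette_recolor_ne_of_exists_above (hkey : Injective key) (hH : H ≤ G)
    (hlow : ∀ u v, H.Adj u v → 3 * G.degree u + 5 ≤ N) (hsymm : ∀ u v, c u v = c v u)
    (hproper : IsProperEdgeColoring G c) {x y : V} (hx : maxNeighborBelow H key y (key y) = some x)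
    (hup : ∃ w, H.Adj y w ∧ key y < key w) :
    palette G (recolor G H key N c) x ≠ palette G (recolor G H key N c) y := by
  obtain ⟨hyx, hxy⟩ : H.Adj y x ∧ key x < key y := by simpa using (topBy_spec hx).1
  obtain ⟨t, hyt, htop⟩ := (H.neighborFinset y).exists_max_image key (by
    obtain ⟨w, hw, -⟩ := hup; exact ⟨w, by simpa using hw⟩)
  have hyt' : key y < key t := by
    obtain ⟨w, hw, hyw⟩ := hup; exact hyw.trans_le (htop w (by simpa using hw))
  refine (palette_recolor_ne_of_mem_partners hkey hH hlow hsymm hproper hyx (by simpa using hyt)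
    (fun h => (hxy.trans hyt').ne' (congrArg key h)) (by simp [partners, hx])
    (fun w _ _ => edgeRank_lt_of_key_lt hxy (hxy.trans hyt')) fun w hyw _ hwt => ?_).symm
  exact edgeRank_lt_edgeRank hyt'
    (lt_of_le_of_ne (htop w (by simpa using hyw)) (hkey.ne hwt))

lemma palette_recolor_ne_of_isLocalMax (hkey : Injective key)
    (hkeyMax : ∀ u v, (∀ w, H.Adj v w → key w < key v) → H.Reachable u v → key u ≤ key v)
    (hH : H ≤ G) (hlow : ∀ u v, H.Adj u v → 3 * G.degree u + 5 ≤ N)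
    (hiso : ∀ u v, H.Adj u v → (∃ w, H.Adj u w ∧ w ≠ v) ∨ (∃ w, H.Adj v w ∧ w ≠ u))
    (hsymm : ∀ u v, c u v = c v u) (hproper : IsProperEdgeColoring G c) {x y : V}
    (hx : maxNeighborBelow H key y (key y) = some x) (hmax : ∀ w, H.Adj y w → key w < key y) :
    palette G (recolor G H key N c) x ≠ palette G (recolor G H key N c) y := by
  have hyx : H.Adj y x := by simpa using (mem_filter.1 (topBy_spec hx).1).1
  have htop : topBy key (H.neighborFinset x) = some y :=
    topBy_eq_some hkey (by simpa using hyx.symm) fun w hw =>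
      hkeyMax w y hmax ((by simpa using hw : H.Adj x w).symm.reachable.trans hyx.symm.reachable)
  obtain ⟨a, b, z, hab, haz, hzb, hb_early, ha_early⟩ :=
    exists_last_edge hkey hyx.symm (hiso x y hyx.symm)
  rcases hab with ⟨rfl, rfl⟩ | ⟨rfl, rfl⟩
  · exact palette_recolor_ne_of_mem_partners hkey hH hlow hsymm hproper hyx.symm haz hzb
      (by simp [partners, htop]) hb_early ha_early
  · exact (palette_recolor_ne_of_mem_partners hkey hH hlow hsymm hproper hyx haz hzb
      (by simp [partners, hx]) hb_early ha_early).symm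

lemma palette_recolor_ne_of_key_lt (hkey : Injective key)
    (hkeyMax : ∀ u v, (∀ w, H.Adj v w → key w < key v) → H.Reachable u v → key u ≤ key v)
    (hH : H ≤ G) (hlow : ∀ u v, H.Adj u v → 3 * G.degree u + 5 ≤ N)
    (hiso : ∀ u v, H.Adj u v → (∃ w, H.Adj u w ∧ w ≠ v) ∨ (∃ w, H.Adj v w ∧ w ≠ u))
    (hsymm : ∀ u v, c u v = c v u) (hproper : IsProperEdgeColoring G c) {x y : V}
    (hxy : H.Adj x y) (hlt : key x < key y) :
    palette G (recolor G H key N c) x ≠ palette G (recolor G H key N c) y := by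
  by_cases hA : ∃ w, H.Adj y w ∧ key x < key w ∧ key w < key y
  · exact palette_recolor_ne_of_exists_between hkey hH hlow hsymm hxy hA
  push Not at hA
  have hx : maxNeighborBelow H key y (key y) = some x :=
    topBy_eq_some hkey (by simpa using ⟨hxy.symm, hlt⟩) fun w hw => by
      obtain ⟨hyw, hwy⟩ : H.Adj y w ∧ key w < key y := by simpa using hw
      exact not_lt.1 fun h => (hA w hyw h).not_gt hwy
  by_cases hB : ∃ w, H.Adj y w ∧ key y < key w
  · exact palette_recolor_ne_of_exists_above hkey hH hlow hsymm hproper hx hB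
  push Not at hB
  exact palette_recolor_ne_of_isLocalMax hkey hkeyMax hH hlow hiso hsymm hproper hx
    fun w hw => lt_of_le_of_ne (hB w hw) (hkey.ne hw.ne.symm)

end Recolor

theorem exists_recoloring_distinguishing [Fintype V] [DecidableEq V] {G H : SimpleGraph V}
    [DecidableRel G.Adj] [DecidableRel H.Adj] {N : ℕ} (hH : H ≤ G)
    (hlow : ∀ u v, H.Adj u v → 3 * G.degree u + 5 ≤ N)
    (hiso : ∀ u v, H.Adj u v → (∃ w, H.Adj u w ∧ w ≠ v) ∨ (∃ w, H.Adj v w ∧ w ≠ u))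
    {c : V → V → ℕ} (hsymm : ∀ u v, c u v = c v u) (hcol : ∀ u v, G.Adj u v → c u v ∈ Icc 1 N)
    (hproper : IsProperEdgeColoring G c) :
    ∃ c' : V → V → ℕ, (∀ u v, c' u v = c' v u) ∧ (∀ u v, G.Adj u v → c' u v ∈ Icc 1 N) ∧
      IsProperEdgeColoring G c' ∧ (∀ u v, ¬H.Adj u v → c' u v = c u v) ∧
      ∀ u v, H.Adj u v → palette G c' u ≠ palette G c' v := by
  have hkey := bfsKey_injective H
  have hkeyMax := fun u v => bfsKey_le_of_isLocalMax H (u := u) (v := v)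
  refine ⟨recolor G H (bfsKey H) N c, recolor_comm hkey hsymm, fun u v => recolor_mem_Icc hlow hcol,
    isProperEdgeColoring_recolor hkey hlow hproper, fun _ _ => recolor_of_not_adj,
    fun u v huv => ?_⟩
  rcases lt_or_gt_of_ne (hkey.ne huv.ne) with h | h
  · exact palette_recolor_ne_of_key_lt hkey hkeyMax hH hlow hiso hsymm hproper huv h
  · exact (palette_recolor_ne_of_key_lt hkey hkeyMax hH hlow hiso hsymm hproper huv.symm h).symm

section LowDegree

variable [Fintype V]

def lowDegreeGraph (G : SimpleGraph V) [DecidableRel G.Adj] (Δ : ℕ) : SimpleGraph V where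
  Adj u v := G.Adj u v ∧ 3 * G.degree u < Δ ∧ 3 * G.degree v < Δ
  symm := ⟨fun _ _ h => ⟨h.1.symm, h.2.2, h.2.1⟩⟩
  loopless := ⟨fun _ h => h.1.ne rfl⟩

instance (G : SimpleGraph V) [DecidableRel G.Adj] (Δ : ℕ) : DecidableRel (lowDegreeGraph G Δ).Adj :=
  fun _ _ => inferInstanceAs (Decidable (_ ∧ _ ∧ _))

variable {G : SimpleGraph V} [DecidableRel G.Adj] {Δ : ℕ}

lemma lowDegreeGraph_adj {u v : V} :
    (lowDegreeGraph G Δ).Adj u v ↔ G.Adj u v ∧ 3 * G.degree u < Δ ∧ 3 * G.degree v < Δ :=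
  Iff.rfl

lemma exists_lowDegreeGraph_adj_ne {u : V} (hu : 3 * G.degree u < Δ)
    (h : 2 ≤ #((G.neighborFinset u).filter fun w => 3 * G.degree w < Δ)) (v : V) :
    ∃ w, (lowDegreeGraph G Δ).Adj u w ∧ w ≠ v := by
  obtain ⟨w, hw, hwv⟩ := exists_mem_ne h v
  obtain ⟨huw, hw⟩ : G.Adj u w ∧ 3 * G.degree w < Δ := by simpa using hw
  exact ⟨w, lowDegreeGraph_adj.2 ⟨huw, hu, hw⟩, hwv⟩

end LowDegree

end AvdRecoloring

open AvdRecoloring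

theorem avd_of_high_degree_distinguishing_general {V : Type*} [Fintype V] [DecidableEq V]
    (G : SimpleGraph V) [DecidableRel G.Adj] (Δ : ℕ)
    (hHNoIsolatedEdge : ∀ u v : V, G.Adj u v →
      3 * G.degree u < Δ → 3 * G.degree v < Δ →
      2 ≤ ((G.neighborFinset u).filter fun w => 3 * G.degree w < Δ).card ∨
      2 ≤ ((G.neighborFinset v).filter fun w => 3 * G.degree w < Δ).card)
    (c : V → V → ℕ)
    (hsym : ∀ u v : V, c u v = c v u)
    (hcol : ∀ u v : V, G.Adj u v → c u v ∈ Finset.Icc 1 (Δ + 300))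
    (hproper : ∀ u v w : V, G.Adj u v → G.Adj u w → v ≠ w → c u v ≠ c u w)
    (hdist : ∀ u v : V, G.Adj u v → Δ ≤ 3 * G.degree u → Δ ≤ 3 * G.degree v →
      (G.neighborFinset u).image (c u) ≠ (G.neighborFinset v).image (c v)) :
    ∃ c' : V → V → ℕ,
      (∀ u v : V, c' u v = c' v u) ∧
      (∀ u v : V, G.Adj u v → c' u v ∈ Finset.Icc 1 (Δ + 300)) ∧
      (∀ u v w : V, G.Adj u v → G.Adj u w → v ≠ w → c' u v ≠ c' u w) ∧
      (∀ u v : V, G.Adj u v →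
        (G.neighborFinset u).image (c' u) ≠ (G.neighborFinset v).image (c' v)) := by
  obtain ⟨c', hsym', hcol', hproper', hoff, hdistLow⟩ :=
    exists_recoloring_distinguishing (H := lowDegreeGraph G Δ) (N := Δ + 300)
      (fun _ _ h => (lowDegreeGraph_adj.1 h).1)
      (fun _ _ h => by have := (lowDegreeGraph_adj.1 h).2.1; omega)
      (fun u v h => by
        obtain ⟨huv, hu, hv⟩ := lowDegreeGraph_adj.1 h
        exact (hHNoIsolatedEdge u v huv hu hv).imp (exists_lowDegreeGraph_adj_ne hu · v)
          (exists_lowDegreeGraph_adj_ne hv · u))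
      hsym hcol hproper
  refine ⟨c', hsym', hcol', hproper', fun u v huv => ?_⟩
  have hhigh : ∀ w, ¬3 * G.degree w < Δ → palette G c' w = palette G c w :=
    fun w hw => image_congr fun x _ => hoff w x fun h => hw (lowDegreeGraph_adj.1 h).2.1
  by_cases hu : 3 * G.degree u < Δ <;> by_cases hv : 3 * G.degree v < Δ
  · exact hdistLow u v (lowDegreeGraph_adj.2 ⟨huv, hu, hv⟩)
  · exact hproper'.palette_ne_of_degree_ne (by omega)
  · exact hproper'.palette_ne_of_degree_ne (by omega)
  · rw [← palette, ← palette, hhigh u hu, hhigh v hv]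
    exact hdist u v huv (by omega) (by omega)

/-- Let `G` have maximum degree `Δ ≥ 4` and let `H` be the subgraph
induced by the vertices of degree `< Δ/3` (i.e. `3·deg < Δ`).  Assume `H` has no
isolated edges (every edge of `H` has an endpoint whose degree inside `H` is at
least `2`), and assume there is a proper edge coloring of `G` with colors
`{1, …, Δ+300}` distinguishing every pair of adjacent vertices both of degree at
least `Δ/3`.  Then `G` has an avd-coloring with colors `{1, …, Δ+300}`. -/
theorem avd_of_high_degree_distinguishing {V : Type*} [Fintype V] [DecidableEq V]
    (G : SimpleGraph V) [DecidableRel G.Adj] (Δ : ℕ)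
    (hΔ : G.maxDegree = Δ) (hΔ4 : 4 ≤ Δ)
    (hHNoIsolatedEdge : ∀ u v : V, G.Adj u v →
      3 * G.degree u < Δ → 3 * G.degree v < Δ →
      2 ≤ ((G.neighborFinset u).filter fun w => 3 * G.degree w < Δ).card ∨
      2 ≤ ((G.neighborFinset v).filter fun w => 3 * G.degree w < Δ).card)
    (c : V → V → ℕ)
    (hsym : ∀ u v : V, c u v = c v u)
    (hcol : ∀ u v : V, G.Adj u v → c u v ∈ Finset.Icc 1 (Δ + 300))
    (hproper : ∀ u v w : V, G.Adj u v → G.Adj u w → v ≠ w → c u v ≠ c u w)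
    (hdist : ∀ u v : V, G.Adj u v → Δ ≤ 3 * G.degree u → Δ ≤ 3 * G.degree v →
      (G.neighborFinset u).image (c u) ≠ (G.neighborFinset v).image (c v)) :
    ∃ c' : V → V → ℕ,
      (∀ u v : V, c' u v = c' v u) ∧
      (∀ u v : V, G.Adj u v → c' u v ∈ Finset.Icc 1 (Δ + 300)) ∧
      (∀ u v w : V, G.Adj u v → G.Adj u w → v ≠ w → c' u v ≠ c' u w) ∧
      (∀ u v : V, G.Adj u v →
        (G.neighborFinset u).image (c' u) ≠ (G.neighborFinset v).image (c' v)) :=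
  avd_of_high_degree_distinguishing_general G Δ hHNoIsolatedEdge c hsym hcol hproper hdist
end

section
/- Let G be a simple graph with maximum degree Δ, let u be a vertex with deg(u) < Δ/3, and let v₁, …, v_r be r distinct neighbors of u, each with deg(v_i) < Δ/3. Let c be a partial proper edge coloring of G with color set {1, …, Δ+300} that colors every edge of G except the edges uv₁, …, uv_r. Then there exist sets L(uv_i) ⊆ {1, …, Δ+300} for 1 ≤ i ≤ r, each of size r + 300, such that: (a) no color of L(uv_i) appears on any colored edge incident to u or to v_i; and (b) for every neighbor v' ≠ u of v_i, if S_c(v') \ S_c(v_i) consists of a single color x, then x ∉ L(uv_i). -/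
/-- Lemma on the lists `L(uv_i)` in the third step.  Let `G` have
maximum degree `Δ`, let `u` be a vertex of degree `< Δ/3`, and let `v 0, …, v (r-1)`
be distinct neighbors of `u`, each of degree `< Δ/3`.  Let `c` be a partial proper
edge coloring with colors `{1, …, Δ+300}` whose uncolored edges are exactly the
edges `u-(v i)` (the set `F` below); `S x` is the set of colors on colored edges at
`x`.  Then there are lists `L i ⊆ {1, …, Δ+300}` of size `r + 300` such that
(a) no color of `L i` appears on a colored edge incident to `u` or to `v i`, and
(b) if a neighbor `v' ≠ u` of `v i` has `S(v') \ S(v i) = {x}`, then `x ∉ L i`. -/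
theorem third_step_lists {V : Type*} [Fintype V] [DecidableEq V]
    (G : SimpleGraph V) [DecidableRel G.Adj] (Δ r : ℕ)
    (hΔ : G.maxDegree = Δ)
    (u : V) (hu : 3 * G.degree u < Δ)
    (v : Fin r → V) (hv : Function.Injective v)
    (hadj : ∀ i, G.Adj u (v i)) (hdeg : ∀ i, 3 * G.degree (v i) < Δ)
    (c : V → V → ℕ)
    (hsym : ∀ x y : V, c x y = c y x)
    (hproper : ∀ x y z : V, G.Adj x y → G.Adj x z → y ≠ z →
      s(x, y) ∉ (Finset.univ.image fun i => s(u, v i)) →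
      s(x, z) ∉ (Finset.univ.image fun i => s(u, v i)) → c x y ≠ c x z)
    (hcol : ∀ x y : V, G.Adj x y → s(x, y) ∉ (Finset.univ.image fun i => s(u, v i)) →
      c x y ∈ Finset.Icc 1 (Δ + 300)) :
    let F : Finset (Sym2 V) := Finset.univ.image fun i => s(u, v i)
    let S : V → Finset ℕ := fun x =>
      ((G.neighborFinset x).filter fun w => s(x, w) ∉ F).image (c x)
    ∃ L : Fin r → Finset ℕ, ∀ i : Fin r,
      L i ⊆ Finset.Icc 1 (Δ + 300) ∧ (L i).card = r + 300 ∧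
      (∀ x ∈ L i, x ∉ S u ∧ x ∉ S (v i)) ∧
      (∀ v' : V, G.Adj (v i) v' → v' ≠ u →
        ∀ x : ℕ, S v' \ S (v i) = {x} → x ∉ L i) := by
  classical
  intro F S
  set I := Finset.Icc 1 (Δ + 300) with hI
  have hru : r ≤ G.degree u := by
    have h1 : (Finset.univ.image v).card ≤ (G.neighborFinset u).card := by
      apply Finset.card_le_card
      intro w hw
      obtain ⟨i, _, rfl⟩ := Finset.mem_image.1 hw
      exact (G.mem_neighborFinset _ _).2 (hadj i)
    rwa [Finset.card_image_of_injective _ hv, Finset.card_univ, Fintype.card_fin] at h1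
  have hSu : (S u).card ≤ G.degree u - r := by
    refine Finset.card_image_le.trans ?_
    have hsub : ((G.neighborFinset u).filter fun w => s(u, w) ∉ F)
        ⊆ G.neighborFinset u \ (Finset.univ.image v) := by
      intro w hw
      simp only [Finset.mem_filter] at hw
      refine Finset.mem_sdiff.2 ⟨hw.1, fun hmem => ?_⟩
      obtain ⟨i, _, rfl⟩ := Finset.mem_image.1 hmem
      exact hw.2 (Finset.mem_image.2 ⟨i, Finset.mem_univ _, rfl⟩)
    refine (Finset.card_le_card hsub).trans ?_
    rw [Finset.card_sdiff_of_subset ?_]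
    · rw [Finset.card_image_of_injective _ hv, Finset.card_univ, Fintype.card_fin]
      rfl
    · intro w hw
      obtain ⟨i, _, rfl⟩ := Finset.mem_image.1 hw
      exact (G.mem_neighborFinset _ _).2 (hadj i)
  have hSv : ∀ w : V, (S w).card ≤ G.degree w := fun w =>
    Finset.card_image_le.trans ((Finset.card_filter_le _ _).trans le_rfl)
  let X : Fin r → Finset ℕ := fun i =>
    (G.neighborFinset (v i)).biUnion fun v' =>
      if (S v' \ S (v i)).card = 1 then S v' \ S (v i) else ∅
  have hX : ∀ i, (X i).card ≤ G.degree (v i) := by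
    intro i
    refine Finset.card_biUnion_le.trans ?_
    calc ∑ v' ∈ G.neighborFinset (v i),
          (if (S v' \ S (v i)).card = 1 then S v' \ S (v i) else ∅).card
        ≤ ∑ _v' ∈ G.neighborFinset (v i), 1 := by
          refine Finset.sum_le_sum fun w _ => ?_
          split_ifs with h
          · exact h.le
          · simp
      _ = G.degree (v i) := by rw [Finset.sum_const, smul_eq_mul, mul_one]; rfl
  have hbad : ∀ i, r + 300 ≤ (I \ (S u ∪ S (v i) ∪ X i)).card := by
    intro i
    have h1 : (S u ∪ S (v i) ∪ X i).card ≤ (S u).card + (S (v i)).card + (X i).card :=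
      (Finset.card_union_le _ _).trans (by
        have := Finset.card_union_le (S u) (S (v i))
        omega)
    have h2 : I.card = Δ + 300 := by simp [hI]
    have h3 := Finset.le_card_sdiff (S u ∪ S (v i) ∪ X i) I
    have h4 := hSv (v i)
    have h5 := hX i
    have h6 := hdeg i
    omega
  have hchoice : ∀ i : Fin r, ∃ t ⊆ I \ (S u ∪ S (v i) ∪ X i), t.card = r + 300 :=
    fun i => Finset.exists_subset_card_eq (hbad i)
  choose L hLsub hLcard using hchoice
  refine ⟨L, fun i => ?_⟩
  have hnotbad : ∀ x ∈ L i, x ∈ I ∧ x ∉ S u ∪ S (v i) ∪ X i := fun x hx =>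
    Finset.mem_sdiff.1 (hLsub i hx)
  refine ⟨fun x hx => (hnotbad x hx).1, hLcard i, fun x hx => ?_, ?_⟩
  · have h := (hnotbad x hx).2
    simp only [Finset.mem_union, not_or] at h
    exact ⟨h.1.1, h.1.2⟩
  · intro v' hadj' hne x hsing hxL
    have h := (hnotbad x hxL).2
    apply h
    refine Finset.mem_union_right _ ?_
    refine Finset.mem_biUnion.2 ⟨v', (G.mem_neighborFinset _ _).2 hadj', ?_⟩
    rw [hsing]
    simp
end

section
/- Let G be a simple graph with maximum degree Δ, let u be a vertex with deg(u) < Δ/3, let v₁, …, v_r (r ≥ 2) be distinct neighbors of u with deg(v_i) < Δ/3 for each i, and suppose every other neighbor of u has degree at least Δ/3. Let c be a proper edge coloring of G with color set {1, …, Δ+300}. Then there exists a proper edge coloring c' of G with color set {1, …, Δ+300} that agrees with c on every edge except possibly the edges uv₁, …, uv_r, such that: (i) S_{c'}(u) ≠ S_{c'}(w) for every neighbor w of u; (ii) S_{c'}(v_i) ≠ S_{c'}(w) for every i and every neighbor w of v_i; and (iii) for every pair of adjacent vertices x, y with S_c(x) ≠ S_c(y), one has S_{c'}(x) ≠ S_{c'}(y).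 -/
set_option linter.unusedSectionVars false

open Finset

section Helpers

variable {V : Type*} [Fintype V] [DecidableEq V]

private def recol (u vk : V) (α : ℕ) (c₁ : V → V → ℕ) : V → V → ℕ :=
  fun x y => if (x = u ∧ y = vk) ∨ (x = vk ∧ y = u) then α else c₁ x y

private def Sc (G : SimpleGraph V) [DecidableRel G.Adj] (c₁ : V → V → ℕ) (x : V) : Finset ℕ :=
  (G.neighborFinset x).image (c₁ x)

private lemma recol_apply_ne {u vk : V} {α : ℕ} {c₁ : V → V → ℕ} {x y : V}
    (h1 : ¬(x = u ∧ y = vk)) (h2 : ¬(x = vk ∧ y = u)) :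
    recol u vk α c₁ x y = c₁ x y := by
  unfold recol
  exact if_neg (by rintro (h | h) <;> [exact h1 h; exact h2 h])

private lemma recol_uvk (u vk : V) (α : ℕ) (c₁ : V → V → ℕ) :
    recol u vk α c₁ u vk = α := if_pos (Or.inl ⟨rfl, rfl⟩)

private lemma recol_comm (u vk : V) (α : ℕ) (c₁ : V → V → ℕ) :
    recol u vk α c₁ = recol vk u α c₁ := by
  funext x y
  unfold recol
  by_cases h : (x = u ∧ y = vk) ∨ (x = vk ∧ y = u)
  · rw [if_pos h, if_pos (by tauto)]
  · rw [if_neg h, if_neg (by tauto)]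

private lemma recol_sym {u vk : V} {α : ℕ} {c₁ : V → V → ℕ}
    (hsym : ∀ x y : V, c₁ x y = c₁ y x) (x y : V) :
    recol u vk α c₁ x y = recol u vk α c₁ y x := by
  unfold recol
  by_cases h : (x = u ∧ y = vk) ∨ (x = vk ∧ y = u)
  · rw [if_pos h, if_pos (by tauto)]
  · rw [if_neg h, if_neg (by tauto)]
    exact hsym x y

private lemma recol_mem_Icc {G : SimpleGraph V} [DecidableRel G.Adj] {Δ : ℕ}
    {u vk : V} {α : ℕ} {c₁ : V → V → ℕ}
    (hcol : ∀ x y : V, G.Adj x y → c₁ x y ∈ Finset.Icc 1 (Δ + 300))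
    (hα : α ∈ Finset.Icc 1 (Δ + 300)) :
    ∀ x y : V, G.Adj x y → recol u vk α c₁ x y ∈ Finset.Icc 1 (Δ + 300) := by
  intro x y hxy
  unfold recol
  split_ifs with h
  · exact hα
  · exact hcol x y hxy

private lemma Sc_recol_of_ne {G : SimpleGraph V} [DecidableRel G.Adj]
    {u vk : V} {α : ℕ} {c₁ : V → V → ℕ} {x : V} (hxu : x ≠ u) (hxv : x ≠ vk) :
    Sc G (recol u vk α c₁) x = Sc G c₁ x := by
  unfold Sc
  apply Finset.image_congr
  intro w _
  exact recol_apply_ne (fun h => hxu h.1) (fun h => hxv h.1)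

private lemma Sc_card {G : SimpleGraph V} [DecidableRel G.Adj] {c₁ : V → V → ℕ}
    (hprop : ∀ x y z : V, G.Adj x y → G.Adj x z → y ≠ z → c₁ x y ≠ c₁ x z) (x : V) :
    (Sc G c₁ x).card = G.degree x := by
  unfold Sc
  rw [Finset.card_image_of_injOn]
  · rfl
  · intro w hw w' hw' hww'
    by_contra hne
    exact hprop x w w' (G.mem_neighborFinset x w |>.1 hw)
      (G.mem_neighborFinset x w' |>.1 hw') hne hww'

/-- image of erased neighborhood is erase of palette, for proper colorings -/
private lemma image_erase_proper {G : SimpleGraph V} [DecidableRel G.Adj] {c₁ : V → V → ℕ}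
    (hprop : ∀ x y z : V, G.Adj x y → G.Adj x z → y ≠ z → c₁ x y ≠ c₁ x z)
    {x y : V} (hy : G.Adj x y) :
    ((G.neighborFinset x).erase y).image (c₁ x) = (Sc G c₁ x).erase (c₁ x y) := by
  ext a
  simp only [Sc, Finset.mem_image, Finset.mem_erase, SimpleGraph.mem_neighborFinset]
  constructor
  · rintro ⟨w, ⟨hwy, hw⟩, rfl⟩
    exact ⟨hprop x w y hw hy hwy, ⟨w, hw, rfl⟩⟩
  · rintro ⟨hne, w, hw, rfl⟩
    exact ⟨w, ⟨fun h => hne (by rw [h]), hw⟩, rfl⟩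

private lemma Sc_recol_u {G : SimpleGraph V} [DecidableRel G.Adj]
    {u vk : V} (huv : G.Adj u vk) {α : ℕ} {c₁ : V → V → ℕ}
    (hprop : ∀ x y z : V, G.Adj x y → G.Adj x z → y ≠ z → c₁ x y ≠ c₁ x z) :
    Sc G (recol u vk α c₁) u = insert α ((Sc G c₁ u).erase (c₁ u vk)) := by
  have hmem : vk ∈ G.neighborFinset u := (G.mem_neighborFinset u vk).2 huv
  have h1 : Sc G (recol u vk α c₁) u
      = (insert vk ((G.neighborFinset u).erase vk)).image (recol u vk α c₁ u) := by
    rw [Finset.insert_erase hmem]; rfl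
  rw [h1, Finset.image_insert, recol_uvk]
  congr 1
  have h2 : ((G.neighborFinset u).erase vk).image (recol u vk α c₁ u)
      = ((G.neighborFinset u).erase vk).image (c₁ u) := by
    apply Finset.image_congr
    intro w hw
    have hwvk : w ≠ vk := (Finset.mem_erase.1 hw).1
    exact recol_apply_ne (fun h => hwvk h.2) (fun h => (G.ne_of_adj huv) h.1)
  rw [h2, image_erase_proper hprop huv]

private lemma Sc_recol_vk {G : SimpleGraph V} [DecidableRel G.Adj]
    {u vk : V} (huv : G.Adj u vk) {α : ℕ} {c₁ : V → V → ℕ}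
    (hprop : ∀ x y z : V, G.Adj x y → G.Adj x z → y ≠ z → c₁ x y ≠ c₁ x z) :
    Sc G (recol u vk α c₁) vk = insert α ((Sc G c₁ vk).erase (c₁ vk u)) := by
  rw [recol_comm]
  exact Sc_recol_u huv.symm hprop

private lemma recol_proper {G : SimpleGraph V} [DecidableRel G.Adj]
    {u vk : V} (huv : G.Adj u vk) {α : ℕ} {c₁ : V → V → ℕ}
    (hprop : ∀ x y z : V, G.Adj x y → G.Adj x z → y ≠ z → c₁ x y ≠ c₁ x z)
    (hαu : α ∉ Sc G c₁ u) (hαv : α ∉ Sc G c₁ vk) :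
    ∀ x y z : V, G.Adj x y → G.Adj x z → y ≠ z →
      recol u vk α c₁ x y ≠ recol u vk α c₁ x z := by
  have key : ∀ x y z : V, G.Adj x y → G.Adj x z → y ≠ z →
      ((x = u ∧ y = vk) ∨ (x = vk ∧ y = u)) →
      ¬((x = u ∧ z = vk) ∨ (x = vk ∧ z = u)) →
      α ≠ c₁ x z := by
    rintro x y z hxy hxz hyz (⟨rfl, rfl⟩ | ⟨rfl, rfl⟩) h2
    · intro hEq
      exact hαu (hEq ▸ Finset.mem_image_of_mem _ ((G.mem_neighborFinset x z).2 hxz))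
    · intro hEq
      exact hαv (hEq ▸ Finset.mem_image_of_mem _ ((G.mem_neighborFinset x z).2 hxz))
  intro x y z hxy hxz hyz
  unfold recol
  split_ifs with h1 h2 h2
  · exfalso
    rcases h1 with ⟨hx1, hy1⟩ | ⟨hx1, hy1⟩ <;> rcases h2 with ⟨hx2, hz2⟩ | ⟨hx2, hz2⟩
    · exact hyz (hy1.trans hz2.symm)
    · exact (G.ne_of_adj huv) (hx1.symm.trans hx2)
    · exact (G.ne_of_adj huv) (hx2.symm.trans hx1)
    · exact hyz (hy1.trans hz2.symm)
  · exact key x y z hxy hxz hyz h1 h2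
  · exact (key x z y hxz hxy hyz.symm h2 h1).symm
  · exact hprop x y z hxy hxz hyz

private lemma main_step {G : SimpleGraph V} [DecidableRel G.Adj] {Δ : ℕ} {r : ℕ}
    {u : V} (hu : 3 * G.degree u < Δ)
    {v : Fin r → V} (hadj : ∀ i, G.Adj u (v i)) (hdegv : ∀ i, 3 * G.degree (v i) < Δ)
    {c₁ : V → V → ℕ}
    (hsym₁ : ∀ x y : V, c₁ x y = c₁ y x)
    (hprop₁ : ∀ x y z : V, G.Adj x y → G.Adj x z → y ≠ z → c₁ x y ≠ c₁ x z)
    (k : Fin r) (Bad : Finset ℕ) (hBad : Bad.card ≤ 299) :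
    ∃ α : ℕ, α ∈ Finset.Icc 1 (Δ + 300) ∧ α ∉ Sc G c₁ u ∧ α ∉ Sc G c₁ (v k) ∧ α ∉ Bad ∧
      (∀ w : V, G.Adj (v k) w → w ≠ u →
        Sc G (recol u (v k) α c₁) (v k) ≠ Sc G (recol u (v k) α c₁) w) := by
  classical
  set vk := v k with hvk
  set A : Finset ℕ := (Sc G c₁ vk).erase (c₁ vk u) with hA
  set B2 : Finset ℕ := ((G.neighborFinset vk).erase u).biUnion
      (fun w => if (Sc G c₁ w \ A).card = 1 then Sc G c₁ w \ A else ∅) with hB2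
  set F : Finset ℕ := Sc G c₁ u ∪ Sc G c₁ vk ∪ B2 ∪ Bad with hF
  have hcardSu : (Sc G c₁ u).card ≤ G.degree u := Finset.card_image_le
  have hcardSv : (Sc G c₁ vk).card ≤ G.degree vk := Finset.card_image_le
  have hcardB2 : B2.card ≤ G.degree vk := by
    calc B2.card ≤ ∑ w ∈ (G.neighborFinset vk).erase u,
          (if (Sc G c₁ w \ A).card = 1 then Sc G c₁ w \ A else ∅).card :=
        Finset.card_biUnion_le
      _ ≤ ∑ w ∈ (G.neighborFinset vk).erase u, 1 := by
        apply Finset.sum_le_sum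
        intro w _
        split_ifs with h
        · omega
        · simp
      _ = ((G.neighborFinset vk).erase u).card := by simp
      _ ≤ (G.neighborFinset vk).card := Finset.card_erase_le
      _ = G.degree vk := rfl
  have hdu : 3 * G.degree u < Δ := hu
  have hdv : 3 * G.degree vk < Δ := hdegv k
  have hFcard : F.card < (Finset.Icc 1 (Δ + 300)).card := by
    have h1 : F.card ≤ (Sc G c₁ u).card + (Sc G c₁ vk).card + B2.card + Bad.card := by
      calc F.card ≤ (Sc G c₁ u ∪ Sc G c₁ vk ∪ B2).card + Bad.card := Finset.card_union_le _ _
        _ ≤ ((Sc G c₁ u ∪ Sc G c₁ vk).card + B2.card) + Bad.card := by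
            have := Finset.card_union_le (Sc G c₁ u ∪ Sc G c₁ vk) B2
            omega
        _ ≤ (((Sc G c₁ u).card + (Sc G c₁ vk).card) + B2.card) + Bad.card := by
            have := Finset.card_union_le (Sc G c₁ u) (Sc G c₁ vk)
            omega
    rw [Nat.card_Icc]
    omega
  obtain ⟨α, hαI, hαF⟩ : ∃ α ∈ Finset.Icc 1 (Δ + 300), α ∉ F := by
    by_contra hcon
    push_neg at hcon
    exact absurd (Finset.card_le_card hcon) (Nat.not_le.2 hFcard)
  have hαu : α ∉ Sc G c₁ u := fun h => hαF (by simp [hF, h])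
  have hαv : α ∉ Sc G c₁ vk := fun h => hαF (by simp [hF, h])
  have hαB2 : α ∉ B2 := fun h => hαF (by simp [hF, h])
  have hαBad : α ∉ Bad := fun h => hαF (by simp [hF, h])
  refine ⟨α, hαI, hαu, hαv, hαBad, ?_⟩
  intro w hw hwu
  have hwvk : w ≠ vk := fun h => (G.irrefl (h ▸ hw))
  have hS2vk : Sc G (recol u vk α c₁) vk = insert α A := Sc_recol_vk (hadj k) hprop₁
  have hS2w : Sc G (recol u vk α c₁) w = Sc G c₁ w := Sc_recol_of_ne hwu hwvk
  rw [hS2vk, hS2w]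
  intro heq
  have hαA : α ∉ A := fun h => hαv (Finset.mem_of_mem_erase h)
  have hTA : Sc G c₁ w \ A = {α} := by
    ext t
    simp only [Finset.mem_sdiff, Finset.mem_singleton]
    constructor
    · rintro ⟨ht, htA⟩
      rw [← heq] at ht
      rcases Finset.mem_insert.1 ht with h | h
      · exact h
      · exact absurd h htA
    · rintro rfl
      exact ⟨heq ▸ Finset.mem_insert_self _ _, hαA⟩
  have : α ∈ B2 := by
    rw [hB2]
    apply Finset.mem_biUnion.2
    refine ⟨w, Finset.mem_erase.2 ⟨hwu, (G.mem_neighborFinset vk w).2 hw⟩, ?_⟩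
    rw [if_pos (by rw [hTA]; simp), hTA]
    simp
  exact hαB2 this

section Phases

variable {G : SimpleGraph V} [DecidableRel G.Adj] {Δ r : ℕ} {u : V} {v : Fin r → V}
  {c c₁ : V → V → ℕ}

/-- Phase 1: secure each `v j` against all of its neighbors other than `u`. -/
private lemma phase1 (hu : 3 * G.degree u < Δ) (hv : Function.Injective v)
    (hadj : ∀ i, G.Adj u (v i)) (hdegv : ∀ i, 3 * G.degree (v i) < Δ)
    (hsym : ∀ x y : V, c x y = c y x)
    (hcol : ∀ x y : V, G.Adj x y → c x y ∈ Finset.Icc 1 (Δ + 300))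
    (hproper : ∀ x y z : V, G.Adj x y → G.Adj x z → y ≠ z → c x y ≠ c x z) :
    ∃ c₁ : V → V → ℕ,
      (∀ x y : V, c₁ x y = c₁ y x) ∧
      (∀ x y : V, G.Adj x y → c₁ x y ∈ Finset.Icc 1 (Δ + 300)) ∧
      (∀ x y z : V, G.Adj x y → G.Adj x z → y ≠ z → c₁ x y ≠ c₁ x z) ∧
      (∀ x y : V, G.Adj x y →
        (∀ i, ¬(x = u ∧ y = v i) ∧ ¬(y = u ∧ x = v i)) → c₁ x y = c x y) ∧
      (∀ j : Fin r, ∀ w : V, G.Adj (v j) w → w ≠ u → Sc G c₁ (v j) ≠ Sc G c₁ w) := by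
  suffices h : ∀ n : ℕ, n ≤ r → ∃ c₁ : V → V → ℕ,
      (∀ x y : V, c₁ x y = c₁ y x) ∧
      (∀ x y : V, G.Adj x y → c₁ x y ∈ Finset.Icc 1 (Δ + 300)) ∧
      (∀ x y z : V, G.Adj x y → G.Adj x z → y ≠ z → c₁ x y ≠ c₁ x z) ∧
      (∀ x y : V, G.Adj x y →
        (∀ i, ¬(x = u ∧ y = v i) ∧ ¬(y = u ∧ x = v i)) → c₁ x y = c x y) ∧
      (∀ j : Fin r, (j : ℕ) < n → ∀ w : V, G.Adj (v j) w → w ≠ u →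
        Sc G c₁ (v j) ≠ Sc G c₁ w) by
    obtain ⟨c₁, h1, h2, h3, h4, h5⟩ := h r le_rfl
    exact ⟨c₁, h1, h2, h3, h4, fun j => h5 j j.isLt⟩
  intro n
  induction n with
  | zero =>
    intro _
    exact ⟨c, hsym, hcol, hproper, fun x y _ _ => rfl,
      fun j hj => absurd hj (Nat.not_lt_zero _)⟩
  | succ n ih =>
    intro hn
    obtain ⟨c₁, h1, h2, h3, h4, h5⟩ := ih (by omega)
    have hnr : n < r := by omega
    set k : Fin r := ⟨n, hnr⟩ with hk
    obtain ⟨α, hαI, hαu, hαv, hαBad, hstep⟩ :=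
      main_step hu hadj hdegv h1 h3 k ∅ (by simp)
    refine ⟨recol u (v k) α c₁, recol_sym h1, recol_mem_Icc h2 hαI,
      recol_proper (hadj k) h3 hαu hαv, ?_, ?_⟩
    · intro x y hxy hpat
      rw [recol_apply_ne (fun h => (hpat k).1 h) (fun h => (hpat k).2 ⟨h.2, h.1⟩)]
      exact h4 x y hxy hpat
    · intro j hj w hw hwu
      by_cases hjk : j = k
      · subst hjk
        exact hstep w hw hwu
      · have hjn : (j : ℕ) < n := by
          rcases Nat.lt_succ_iff_lt_or_eq.1 hj with h | h
          · exact h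
          · exact absurd (Fin.ext h) hjk
        by_cases hwk : w = v k
        · subst hwk
          exact (hstep (v j) hw.symm (hadj j).ne').symm
        · rw [Sc_recol_of_ne (hadj j).ne' (fun h => hjk (hv h)),
            Sc_recol_of_ne hwu hwk]
          exact h5 j hjn w hw hwu

/-- Prefix step: make sure at least one pair `(u, v l)` is distinguished. -/
private lemma prefix_step (hr : 2 ≤ r) (hu : 3 * G.degree u < Δ)
    (hv : Function.Injective v)
    (hadj : ∀ i, G.Adj u (v i)) (hdegv : ∀ i, 3 * G.degree (v i) < Δ)
    (h1 : ∀ x y : V, c₁ x y = c₁ y x)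
    (h2 : ∀ x y : V, G.Adj x y → c₁ x y ∈ Finset.Icc 1 (Δ + 300))
    (h3 : ∀ x y z : V, G.Adj x y → G.Adj x z → y ≠ z → c₁ x y ≠ c₁ x z)
    (h4 : ∀ x y : V, G.Adj x y →
        (∀ i, ¬(x = u ∧ y = v i) ∧ ¬(y = u ∧ x = v i)) → c₁ x y = c x y)
    (h5 : ∀ j : Fin r, ∀ w : V, G.Adj (v j) w → w ≠ u → Sc G c₁ (v j) ≠ Sc G c₁ w) :
    ∃ c₂ : V → V → ℕ,
      (∀ x y : V, c₂ x y = c₂ y x) ∧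
      (∀ x y : V, G.Adj x y → c₂ x y ∈ Finset.Icc 1 (Δ + 300)) ∧
      (∀ x y z : V, G.Adj x y → G.Adj x z → y ≠ z → c₂ x y ≠ c₂ x z) ∧
      (∀ x y : V, G.Adj x y →
        (∀ i, ¬(x = u ∧ y = v i) ∧ ¬(y = u ∧ x = v i)) → c₂ x y = c x y) ∧
      (∀ j : Fin r, ∀ w : V, G.Adj (v j) w → w ≠ u → Sc G c₂ (v j) ≠ Sc G c₂ w) ∧
      (∃ l : Fin r, Sc G c₂ u ≠ Sc G c₂ (v l)) := by
  by_cases hL : ∃ l : Fin r, Sc G c₁ u ≠ Sc G c₁ (v l)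
  · exact ⟨c₁, h1, h2, h3, h4, h5, hL⟩
  push_neg at hL
  have h0r : 0 < r := by omega
  have h1r : 1 < r := by omega
  set k : Fin r := ⟨0, h0r⟩ with hk
  set l₁ : Fin r := ⟨1, h1r⟩ with hl₁
  obtain ⟨α, hαI, hαu, hαv, hαBad, hstep⟩ :=
    main_step hu hadj hdegv h1 h3 k ∅ (by simp)
  set c₂ := recol u (v k) α c₁ with hc₂
  have hsec : ∀ j : Fin r, ∀ w : V, G.Adj (v j) w → w ≠ u →
      Sc G c₂ (v j) ≠ Sc G c₂ w := by
    intro j w hw hwu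
    by_cases hjk : j = k
    · subst hjk
      exact hstep w hw hwu
    · by_cases hwk : w = v k
      · subst hwk
        exact (hstep (v j) hw.symm (hadj j).ne').symm
      · rw [hc₂, Sc_recol_of_ne (hadj j).ne' (fun h => hjk (hv h)),
          Sc_recol_of_ne hwu hwk]
        exact h5 j w hw hwu
  refine ⟨c₂, recol_sym h1, recol_mem_Icc h2 hαI,
    recol_proper (hadj k) h3 hαu hαv, ?_, hsec, ⟨l₁, ?_⟩⟩
  · intro x y hxy hpat
    rw [hc₂, recol_apply_ne (fun h => (hpat k).1 h) (fun h => (hpat k).2 ⟨h.2, h.1⟩)]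
    exact h4 x y hxy hpat
  · have hl1k : l₁ ≠ k := by
      simp [hl₁, hk, Fin.ext_iff]
    have hS2u : Sc G c₂ u = insert α ((Sc G c₁ u).erase (c₁ u (v k))) :=
      Sc_recol_u (hadj k) h3
    have hS2vl : Sc G c₂ (v l₁) = Sc G c₁ (v l₁) :=
      Sc_recol_of_ne (hadj l₁).ne' (fun h => hl1k (hv h))
    intro heq
    have hα2 : α ∈ Sc G c₂ u := hS2u ▸ Finset.mem_insert_self _ _
    rw [heq, hS2vl, ← hL l₁] at hα2
    exact hαu hα2

/-- Fix step: distinguish `u` from every `v l`, keeping all other properties. -/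
private lemma fix_step (hu : 3 * G.degree u < Δ) (hv : Function.Injective v)
    (hadj : ∀ i, G.Adj u (v i)) (hdegv : ∀ i, 3 * G.degree (v i) < Δ)
    (h1 : ∀ x y : V, c₁ x y = c₁ y x)
    (h2 : ∀ x y : V, G.Adj x y → c₁ x y ∈ Finset.Icc 1 (Δ + 300))
    (h3 : ∀ x y z : V, G.Adj x y → G.Adj x z → y ≠ z → c₁ x y ≠ c₁ x z)
    (h4 : ∀ x y : V, G.Adj x y →
        (∀ i, ¬(x = u ∧ y = v i) ∧ ¬(y = u ∧ x = v i)) → c₁ x y = c x y)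
    (h5 : ∀ j : Fin r, ∀ w : V, G.Adj (v j) w → w ≠ u → Sc G c₁ (v j) ≠ Sc G c₁ w)
    (hL : ∃ l : Fin r, Sc G c₁ u ≠ Sc G c₁ (v l)) :
    ∃ c₂ : V → V → ℕ,
      (∀ x y : V, c₂ x y = c₂ y x) ∧
      (∀ x y : V, G.Adj x y → c₂ x y ∈ Finset.Icc 1 (Δ + 300)) ∧
      (∀ x y z : V, G.Adj x y → G.Adj x z → y ≠ z → c₂ x y ≠ c₂ x z) ∧
      (∀ x y : V, G.Adj x y →
        (∀ i, ¬(x = u ∧ y = v i) ∧ ¬(y = u ∧ x = v i)) → c₂ x y = c x y) ∧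
      (∀ j : Fin r, ∀ w : V, G.Adj (v j) w → w ≠ u → Sc G c₂ (v j) ≠ Sc G c₂ w) ∧
      (∀ l : Fin r, Sc G c₂ u ≠ Sc G c₂ (v l)) := by
  classical
  set Su : Finset ℕ := Sc G c₁ u with hSu
  set T : Fin r → Finset ℕ := fun l => Sc G c₁ (v l) with hT
  set β : Fin r → ℕ := fun j => c₁ u (v j) with hβ
  set E : Fin r → Finset ℕ := fun j => Su.erase (β j) with hE
  have hβmem : ∀ j : Fin r, β j ∈ Su := fun j =>
    Finset.mem_image_of_mem _ ((G.mem_neighborFinset u (v j)).2 (hadj j))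
  have hβT : ∀ j : Fin r, β j ∈ T j := by
    intro j
    have hc : c₁ (v j) u = β j := h1 (v j) u
    exact hc ▸ Finset.mem_image_of_mem _
      ((G.mem_neighborFinset (v j) u).2 (hadj j).symm)
  have hcardE : ∀ j : Fin r, (E j).card + 1 = Su.card := fun j =>
    Finset.card_erase_add_one (hβmem j)
  have hins : ∀ j : Fin r, insert (β j) (E j) = Su := fun j =>
    Finset.insert_erase (hβmem j)
  set SafeF : Finset (Fin r) := Finset.univ.filter (fun l => Su ≠ T l) with hSafeF
  set critS : Fin r → Finset (Fin r) := fun j =>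
    SafeF.filter (fun l => l ≠ j ∧ E j ⊆ T l ∧ (T l).card = Su.card) with hcritS
  have hdisj : ∀ j j' : Fin r, j ≠ j' → ∀ l, l ∈ critS j → l ∈ critS j' → False := by
    intro j j' hjj' l hl hl'
    obtain ⟨hlSafe, _, hsubj, hcardl⟩ := Finset.mem_filter.1 hl
    obtain ⟨_, _, hsubj', _⟩ := Finset.mem_filter.1 hl'
    have hβne : β j ≠ β j' :=
      h3 u (v j) (v j') (hadj j) (hadj j') (fun h => hjj' (hv h))
    have hSuT : Su ⊆ T l := by
      intro x hx
      by_cases hxβ : x = β j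
      · exact hsubj' (Finset.mem_erase.2 ⟨by rw [hxβ]; exact hβne, hx⟩)
      · exact hsubj (Finset.mem_erase.2 ⟨hxβ, hx⟩)
    exact (Finset.mem_filter.1 hlSafe).2
      (Finset.eq_of_subset_of_card_le hSuT (le_of_eq hcardl))
  have hSafeNe : SafeF.Nonempty := by
    obtain ⟨l, hl⟩ := hL
    exact ⟨l, Finset.mem_filter.2 ⟨Finset.mem_univ _, hl⟩⟩
  have hex : ∃ k ∈ SafeF, (critS k).card ≤ 1 := by
    by_contra hcon
    push_neg at hcon
    have hpd : (SafeF : Set (Fin r)).PairwiseDisjoint critS := by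
      intro j hj j' hj' hjj'
      exact Finset.disjoint_left.2 (fun l hl hl' => hdisj j j' hjj' l hl hl')
    have hsum : ∑ k ∈ SafeF, (critS k).card = (SafeF.biUnion critS).card :=
      (Finset.card_biUnion (fun j hj j' hj' hjj' =>
        Finset.disjoint_left.2 (fun l hl hl' => hdisj j j' hjj' l hl hl'))).symm
    have hsub : SafeF.biUnion critS ⊆ SafeF :=
      Finset.biUnion_subset.2 (fun j _ => Finset.filter_subset _ _)
    have h2' : 2 * SafeF.card ≤ ∑ k ∈ SafeF, (critS k).card := by
      calc 2 * SafeF.card = ∑ _k ∈ SafeF, 2 := by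
            rw [Finset.sum_const, smul_eq_mul, mul_comm]
        _ ≤ ∑ k ∈ SafeF, (critS k).card :=
            Finset.sum_le_sum (fun j hj => hcon j hj)
    have hle := Finset.card_le_card hsub
    have hpos : 0 < SafeF.card := Finset.card_pos.2 hSafeNe
    omega
  obtain ⟨k, hkSafe, hkcrit⟩ := hex
  set Bad : Finset ℕ := (critS k).biUnion (fun l => T l \ E k) with hBad
  have hBadcard : Bad.card ≤ 299 := by
    have hb1 : Bad.card ≤ ∑ l ∈ critS k, (T l \ E k).card := Finset.card_biUnion_le
    have hb2 : ∑ l ∈ critS k, (T l \ E k).card ≤ ∑ _l ∈ critS k, 1 := by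
      apply Finset.sum_le_sum
      intro l hl
      obtain ⟨_, _, hsub, hcard⟩ := Finset.mem_filter.1 hl
      rw [Finset.card_sdiff_of_subset hsub]
      have := hcardE k
      omega
    have hb3 : ∑ _l ∈ critS k, 1 = (critS k).card := by simp
    omega
  obtain ⟨α, hαI, hαu, hαv, hαBad, hstep⟩ :=
    main_step hu hadj hdegv h1 h3 k Bad hBadcard
  set c₂ := recol u (v k) α c₁ with hc₂
  have hS2u : Sc G c₂ u = insert α (E k) := Sc_recol_u (hadj k) h3
  have hsec : ∀ j : Fin r, ∀ w : V, G.Adj (v j) w → w ≠ u →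
      Sc G c₂ (v j) ≠ Sc G c₂ w := by
    intro j w hw hwu
    by_cases hjk : j = k
    · subst hjk
      exact hstep w hw hwu
    · by_cases hwk : w = v k
      · subst hwk
        exact (hstep (v j) hw.symm (hadj j).ne').symm
      · rw [hc₂, Sc_recol_of_ne (hadj j).ne' (fun h => hjk (hv h)),
          Sc_recol_of_ne hwu hwk]
        exact h5 j w hw hwu
  have harm : ∀ l : Fin r, Sc G c₂ u ≠ Sc G c₂ (v l) := by
    intro l heq
    by_cases hlk : l = k
    · subst hlk
      have hS2vl : Sc G c₂ (v l) = insert α ((T l).erase (β l)) := by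
        rw [hc₂, Sc_recol_vk (hadj l) h3, h1 (v l) u]
      rw [hS2u, hS2vl] at heq
      have hαE : α ∉ E l := fun h => hαu (Finset.mem_of_mem_erase h)
      have hαD : α ∉ (T l).erase (β l) := fun h => hαv (Finset.mem_of_mem_erase h)
      have hED : E l = (T l).erase (β l) := by
        have h' := congrArg (fun s => Finset.erase s α) heq
        simpa [Finset.erase_insert hαE, Finset.erase_insert hαD] using h'
      have : Su = T l := by
        rw [← hins l, hED, Finset.insert_erase (hβT l)]
      exact (Finset.mem_filter.1 hkSafe).2 this
    · have hvlu : v l ≠ u := (hadj l).ne'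
      have hvlk : v l ≠ v k := fun h => hlk (hv h)
      have hS2vl : Sc G c₂ (v l) = T l := Sc_recol_of_ne hvlu hvlk
      rw [hS2u, hS2vl] at heq
      by_cases hlSafe : Su = T l
      · have hαT : α ∈ T l := heq ▸ Finset.mem_insert_self α (E k)
        rw [← hlSafe] at hαT
        exact hαu hαT
      · have hαE : α ∉ E k := fun h => hαu (Finset.mem_of_mem_erase h)
        have hsub : E k ⊆ T l := heq ▸ Finset.subset_insert α (E k)
        have hcard : (T l).card = Su.card := by
          rw [← heq, Finset.card_insert_of_notMem hαE]
          have := hcardE k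
          omega
        have hlcrit : l ∈ critS k := Finset.mem_filter.2
          ⟨Finset.mem_filter.2 ⟨Finset.mem_univ _, hlSafe⟩, hlk, hsub, hcard⟩
        have hαBad' : α ∈ Bad := Finset.mem_biUnion.2
          ⟨l, hlcrit, Finset.mem_sdiff.2 ⟨heq ▸ Finset.mem_insert_self α (E k), hαE⟩⟩
        exact hαBad hαBad'
  refine ⟨c₂, recol_sym h1, recol_mem_Icc h2 hαI,
    recol_proper (hadj k) h3 hαu hαv, ?_, hsec, harm⟩
  intro x y hxy hpat
  rw [hc₂, recol_apply_ne (fun h => (hpat k).1 h) (fun h => (hpat k).2 ⟨h.2, h.1⟩)]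
  exact h4 x y hxy hpat

end Phases

end Helpers

/-- recoloring step.  Let `G` have maximum degree `Δ`, let `u`
be a vertex of degree `< Δ/3`, let `v 0, …, v (r-1)` (`r ≥ 2`) be distinct
neighbors of `u` of degree `< Δ/3`, and suppose every other neighbor of `u` has
degree at least `Δ/3`.  Given a symmetric proper edge coloring `c` of `G` with
colors `{1, …, Δ+300}`, there is a symmetric proper edge coloring `c'` with the
same colors, agreeing with `c` except possibly on the edges `u-(v i)`, such that
(i) `S_{c'}(u) ≠ S_{c'}(w)` for every neighbor `w` of `u`; (ii) `S_{c'}(v i) ≠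
S_{c'}(w)` for every `i` and every neighbor `w` of `v i`; (iii) every pair of
adjacent vertices distinguished by `c` is still distinguished by `c'`. -/
theorem recolor_third_step {V : Type*} [Fintype V] [DecidableEq V]
    (G : SimpleGraph V) [DecidableRel G.Adj] (Δ r : ℕ)
    (hΔ : G.maxDegree = Δ) (hr : 2 ≤ r)
    (u : V) (hu : 3 * G.degree u < Δ)
    (v : Fin r → V) (hv : Function.Injective v)
    (hadj : ∀ i, G.Adj u (v i)) (hdegv : ∀ i, 3 * G.degree (v i) < Δ)
    (hother : ∀ w : V, G.Adj u w → (∀ i, w ≠ v i) → Δ ≤ 3 * G.degree w)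
    (c : V → V → ℕ)
    (hsym : ∀ x y : V, c x y = c y x)
    (hcol : ∀ x y : V, G.Adj x y → c x y ∈ Finset.Icc 1 (Δ + 300))
    (hproper : ∀ x y z : V, G.Adj x y → G.Adj x z → y ≠ z → c x y ≠ c x z) :
    ∃ c' : V → V → ℕ,
      (∀ x y : V, c' x y = c' y x) ∧
      (∀ x y : V, G.Adj x y → c' x y ∈ Finset.Icc 1 (Δ + 300)) ∧
      (∀ x y z : V, G.Adj x y → G.Adj x z → y ≠ z → c' x y ≠ c' x z) ∧
      (∀ x y : V, G.Adj x y →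
        (∀ i, ¬(x = u ∧ y = v i) ∧ ¬(y = u ∧ x = v i)) → c' x y = c x y) ∧
      (∀ w : V, G.Adj u w →
        (G.neighborFinset u).image (c' u) ≠ (G.neighborFinset w).image (c' w)) ∧
      (∀ i : Fin r, ∀ w : V, G.Adj (v i) w →
        (G.neighborFinset (v i)).image (c' (v i)) ≠ (G.neighborFinset w).image (c' w)) ∧
      (∀ x y : V, G.Adj x y →
        (G.neighborFinset x).image (c x) ≠ (G.neighborFinset y).image (c y) →
        (G.neighborFinset x).image (c' x) ≠ (G.neighborFinset y).image (c' y)) := by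
  classical
  obtain ⟨c₁, p1, p2, p3, p4, p5⟩ := phase1 hu hv hadj hdegv hsym hcol hproper
  obtain ⟨c₂, q1, q2, q3, q4, q5, qL⟩ :=
    prefix_step hr hu hv hadj hdegv p1 p2 p3 p4 p5
  obtain ⟨c₃, s1, s2, s3, s4, s5, s6⟩ :=
    fix_step hu hv hadj hdegv q1 q2 q3 q4 q5 qL
  have hv5 : ∀ w : V, G.Adj u w →
      (G.neighborFinset u).image (c₃ u) ≠ (G.neighborFinset w).image (c₃ w) := by
    intro w hw
    by_cases hwv : ∃ i, w = v i
    · obtain ⟨i, rfl⟩ := hwv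
      exact s6 i
    · push_neg at hwv
      have hdw : Δ ≤ 3 * G.degree w := hother w hw hwv
      have hcu : ((G.neighborFinset u).image (c₃ u)).card = G.degree u := Sc_card s3 u
      have hcw : ((G.neighborFinset w).image (c₃ w)).card = G.degree w := Sc_card s3 w
      intro heq
      have hcards := congrArg Finset.card heq
      rw [hcu, hcw] at hcards
      omega
  have hv6 : ∀ i : Fin r, ∀ w : V, G.Adj (v i) w →
      (G.neighborFinset (v i)).image (c₃ (v i)) ≠ (G.neighborFinset w).image (c₃ w) := by
    intro i w hw
    by_cases hwu : w = u
    · subst hwu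
      exact (s6 i).symm
    · exact s5 i w hw hwu
  refine ⟨c₃, s1, s2, s3, s4, hv5, hv6, ?_⟩
  intro x y hxy hold
  have untouched : ∀ z : V, z ≠ u → (∀ i, z ≠ v i) →
      (G.neighborFinset z).image (c₃ z) = (G.neighborFinset z).image (c z) := by
    intro z hzu hzv
    apply Finset.image_congr
    intro w hw
    exact s4 z w ((G.mem_neighborFinset z w).1 hw)
      (fun i => ⟨fun h => hzu h.1, fun h => hzv i h.2⟩)
  by_cases hxu : x = u
  · subst hxu
    exact hv5 y hxy
  by_cases hyu : y = u
  · subst hyu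
    exact (hv5 x hxy.symm).symm
  by_cases hxv : ∃ i, x = v i
  · obtain ⟨i, rfl⟩ := hxv
    exact hv6 i y hxy
  by_cases hyv : ∃ i, y = v i
  · obtain ⟨i, rfl⟩ := hyv
    exact (hv6 i x hxy.symm).symm
  push_neg at hxv hyv
  rw [untouched x hxu hxv, untouched y hyu hyv]
  exact hold
end

section
/- Let r ≥ 1, let L₁, …, L_r be finite sets of colors, each of size r + 300, let C be a finite set of colors disjoint from each L_j, fix an index i with 1 ≤ i ≤ r, and fix a finite set T of colors. Then the number of injective functions f from {1, …, r} to the colors with f(j) ∈ L_j for every j and with C ∪ {f(1), …, f(r)} = T ∪ {f(i)} is at most (r+300)·(r−1)!. -/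
/-!
Fix the colour `a = f i`. Since `C` is disjoint from every list, the condition
`C ∪ {f 1, …, f r} = T ∪ {a}` forces the image of `f` to be `S = (T ∪ {a}) \ C`, so `f`
restricted to the indices other than `i` is an injection into the `r - 1` colours of
`S \ {a}`; there are at most `(r - 1)!` of these. Summing over the `r + 300` colours
`a ∈ L i` gives the bound.
-/

open Finset Function
open scoped Nat

section CountingInjections

variable {ι α : Type*} [Fintype ι] [DecidableEq ι] [Fintype α] [DecidableEq α]

theorem card_injective_mem_apply_eq_le_card_embedding (S : Finset α) (i : ι) (a : α) :
    #{f : ι → α | Injective f ∧ (∀ j, f j ∈ S) ∧ f i = a} ≤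
      Fintype.card ({j // j ≠ i} ↪ S.erase a) := by
  rw [← Fintype.card_coe]
  refine Fintype.card_le_of_injective
    (fun f => ⟨fun j => ⟨f.1 j, ?_⟩, fun j k hjk => ?_⟩) fun f g hfg => ?_
  · obtain ⟨hinj, hS, hfi⟩ := (mem_filter.1 f.2).2
    exact mem_erase.2 ⟨fun h => j.2 (hinj (h.trans hfi.symm)), hS j⟩
  · exact Subtype.ext ((mem_filter.1 f.2).2.1 (congrArg Subtype.val hjk))
  · refine Subtype.ext (funext fun j => ?_)
    by_cases hj : j = i
    · rw [hj, (mem_filter.1 f.2).2.2.2, (mem_filter.1 g.2).2.2.2]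
    · exact congrArg Subtype.val (DFunLike.congr_fun hfg ⟨j, hj⟩)

theorem card_injective_image_eq_apply_eq_le (S : Finset α) (i : ι) (a : α) :
    #{f : ι → α | Injective f ∧ univ.image f = S ∧ f i = a} ≤ (Fintype.card ι - 1)! := by
  obtain h | ⟨f₀, hf₀⟩ := eq_empty_or_nonempty
    {f : ι → α | Injective f ∧ univ.image f = S ∧ f i = a}
  · simp [h]
  obtain ⟨hinj₀, rfl, rfl⟩ := (mem_filter.1 hf₀).2
  have hcard : #((univ.image f₀).erase (f₀ i)) = Fintype.card ι - 1 := by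
    rw [card_erase_of_mem (mem_image_of_mem f₀ (mem_univ i)),
      card_image_of_injective _ hinj₀, card_univ]
  calc #{f : ι → α | Injective f ∧ univ.image f = univ.image f₀ ∧ f i = f₀ i}
      ≤ #{f : ι → α | Injective f ∧ (∀ j, f j ∈ univ.image f₀) ∧ f i = f₀ i} := by
        refine card_le_card (monotone_filter_right _ fun f _ ⟨hinj, him, hfi⟩ =>
          ⟨hinj, fun j => him ▸ mem_image_of_mem f (mem_univ j), hfi⟩)
    _ ≤ Fintype.card ({j // j ≠ i} ↪ (univ.image f₀).erase (f₀ i)) :=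
        card_injective_mem_apply_eq_le_card_embedding _ i _
    _ = (Fintype.card ι - 1)! := by
        rw [Fintype.card_embedding_eq, Fintype.card_coe, hcard, Fintype.card_subtype_compl,
          Fintype.card_subtype_eq, Nat.descFactorial_self]

end CountingInjections

theorem image_eq_sdiff_of_union_image_eq {ι α : Type*} [Fintype ι] [DecidableEq α]
    {f : ι → α} {C U : Finset α} (hC : ∀ j, f j ∉ C) (h : C ∪ univ.image f = U) :
    univ.image f = U \ C := by
  have hdisj : Disjoint C (univ.image f) := disjoint_right.2 fun x hx => by
    obtain ⟨j, -, rfl⟩ := mem_image.1 hx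
    exact hC j
  rw [← h, union_sdiff_cancel_left hdisj]

theorem count_injective_choice_functions_le_general {α : Type*} [Fintype α] [DecidableEq α]
    (r : ℕ) (L : Fin r → Finset α) (hL : ∀ j, (L j).card = r + 300)
    (C : Finset α) (hC : ∀ j, Disjoint C (L j)) (i : Fin r) (T : Finset α) :
    (Finset.univ.filter fun f : Fin r → α =>
        Function.Injective f ∧ (∀ j, f j ∈ L j) ∧
        C ∪ Finset.univ.image f = T ∪ {f i}).card ≤
      (r + 300) * (r - 1).factorial := by
  set P := (Finset.univ.filter fun f : Fin r → α =>
      Function.Injective f ∧ (∀ j, f j ∈ L j) ∧ C ∪ Finset.univ.image f = T ∪ {f i})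
  have hfiber : ∀ a ∈ L i, #{f ∈ P | f i = a} ≤ (r - 1)! := fun a _ =>
    calc #{f ∈ P | f i = a}
        ≤ #{f : Fin r → α | Injective f ∧ univ.image f = (T ∪ {a}) \ C ∧ f i = a} := by
          refine card_le_card fun f hf => ?_
          obtain ⟨hfP, rfl⟩ := mem_filter.1 hf
          obtain ⟨-, hinj, hmem, hunion⟩ := mem_filter.1 hfP
          refine mem_filter.2 ⟨mem_univ f, hinj, ?_, rfl⟩
          exact image_eq_sdiff_of_union_image_eq (fun j => disjoint_right.1 (hC j) (hmem j)) hunion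
      _ ≤ (Fintype.card (Fin r) - 1)! := card_injective_image_eq_apply_eq_le _ i a
      _ = (r - 1)! := by rw [Fintype.card_fin]
  calc #P = ∑ a ∈ L i, #{f ∈ P | f i = a} :=
        card_eq_sum_card_fiberwise fun f hf => (mem_filter.1 hf).2.2.1 i
    _ ≤ #(L i) * (r - 1)! := sum_le_card_nsmul _ _ _ hfiber
    _ = (r + 300) * (r - 1)! := by rw [hL i]

/-- Let `L 0, …, L (r-1)` (`r ≥ 1`) be lists of colors, each of
size `r + 300`, let `C` be a finite set of colors disjoint from every `L j`, fix an
index `i` and a finite set `T` of colors.  Then the number of injective choice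
functions `f` (injective, `f j ∈ L j` for all `j`) satisfying
`C ∪ {f 0, …, f (r-1)} = T ∪ {f i}` is at most `(r+300)·(r-1)!`. -/
theorem count_injective_choice_functions_le {α : Type*} [Fintype α] [DecidableEq α]
    (r : ℕ) (hr : 1 ≤ r) (L : Fin r → Finset α) (hL : ∀ j, (L j).card = r + 300)
    (C : Finset α) (hC : ∀ j, Disjoint C (L j)) (i : Fin r) (T : Finset α) :
    (Finset.univ.filter fun f : Fin r → α =>
        Function.Injective f ∧ (∀ j, f j ∈ L j) ∧
        C ∪ Finset.univ.image f = T ∪ {f i}).card ≤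
      (r + 300) * (r - 1).factorial :=
  count_injective_choice_functions_le_general r L hL C hC i T
end
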